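/- Let U, V ⊆ ℝ^n be open, F : U → ℝ^p and G : V → ℝ^p differentiable maps, and φ : U → V a lipeomorphism such that F ≈ G via φ (i.e. F ≈_x G via φ at every point x ∈ U). Then φ(Sing(F)) = Sing(G), where Sing(F) = {x ∈ U : rank D_xF < p} is the set of singular points of F and D_xF denotes the total derivative of F at x. -/

import Mathlib

open Filter Set Metric Topology Asymptotics

noncomputable section

set_option synthInstance.maxHeartbeats 1000000

/-- `ℝ^n` with the Euclidean structure. -/
abbrev Eucl (n : ℕ) : Type := EuclideanSpace ℝ (Fin n)

variable {V W : Type*} [NormedAddCommGroup V] [NormedSpace ℝ V]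
  [NormedAddCommGroup W] [NormedSpace ℝ W]

/-- `F` admits the `α`-derivative `H` at `x`:  `H` is continuous and for every direction `v`,
`F (x + t v) - F x = t ^ α • H v + o(t ^ α)` as `t → 0⁺`. -/
def HasAlphaDerivAt (F : V → W) (x : V) (α : ℝ) (H : V → W) : Prop :=
  Continuous H ∧ ∀ v : V,
    Tendsto (fun t : ℝ => (t ^ α)⁻¹ • (F (x + t • v) - F x - t ^ α • H v))
      (𝓝[>] (0 : ℝ)) (𝓝 0)

/-- `F` has order `α` at `x`: for every nonzero direction `v` the limit of
`F (x + t v) / t ^ α` as `t → 0⁺` exists, and for at least one `v` it is nonzero. -/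
def HasOrderAt (F : V → W) (x : V) (α : ℝ) : Prop :=
  (∀ v : V, v ≠ 0 → ∃ L : W,
      Tendsto (fun t : ℝ => (t ^ α)⁻¹ • F (x + t • v)) (𝓝[>] (0 : ℝ)) (𝓝 L)) ∧
  ∃ v : V, v ≠ 0 ∧ ∃ L : W, L ≠ 0 ∧
      Tendsto (fun t : ℝ => (t ^ α)⁻¹ • F (x + t • v)) (𝓝[>] (0 : ℝ)) (𝓝 L)

/-- `φ` is a lipeomorphism from `U` onto `V'`. -/
def IsLipeoOn (φ : V → W) (U : Set V) (V' : Set W) : Prop :=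
  Set.BijOn φ U V' ∧ ∃ c : ℝ, 1 ≤ c ∧ ∀ x ∈ U, ∀ y ∈ U,
    (1 / c) * ‖x - y‖ ≤ ‖φ x - φ y‖ ∧ ‖φ x - φ y‖ ≤ c * ‖x - y‖

/-- `d` is a pseudo-Lipschitz derivative of `φ` at `x`: along some sequence `t_j → 0⁺`,
`(φ (x + t_j v) - φ x) / t_j → d v` uniformly on compact sets. -/
def IsPseudoLipDerivAt (φ : V → V) (x : V) (d : V → V) : Prop :=
  ∃ t : ℕ → ℝ, (∀ j, 0 < t j) ∧ Tendsto t atTop (𝓝 (0 : ℝ)) ∧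
    ∀ K : Set V, IsCompact K →
      TendstoUniformlyOn (fun j v => (t j)⁻¹ • (φ (x + t j • v) - φ x)) d atTop K

/-- `F ∼ G` at `x₀`: asymptotic equivalence of `F` and `G` at `x₀`. -/
def AsympEquivAt (F G : V → W) (x₀ : V) : Prop :=
  ∃ c₁ c₂ : ℝ, 0 < c₁ ∧ 0 < c₂ ∧
    ∀ᶠ x in 𝓝 x₀, c₂ * ‖F x‖ ≤ ‖G x‖ ∧ ‖G x‖ ≤ c₁ * ‖F x‖

/-- `F ≈ G` at `x₀` via the lipeomorphism `φ`. -/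
def AsympLipEquivAtVia {V' : Type*} [NormedAddCommGroup V'] [NormedSpace ℝ V']
    (F : V → W) (G : V' → W) (φ : V → V') (x₀ : V) : Prop :=
  ∃ c : ℝ, 1 ≤ c ∧ ∀ᶠ x in 𝓝 x₀,
    (1 / c) * ‖F x - F x₀‖ ≤ ‖G (φ x) - G (φ x₀)‖ ∧
      ‖G (φ x) - G (φ x₀)‖ ≤ c * ‖F x - F x₀‖

/-- The degree-`m` term of the Taylor series of `F` at `0`; for a `C^∞` germ of
finite order `m` this is its initial part `in(F)`. -/
def inPart (F : V → ℝ) (m : ℕ) : V → ℝ :=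
  fun x => (m.factorial : ℝ)⁻¹ • iteratedFDeriv ℝ m F 0 (fun _ => x)

/-- The set of singular points of `F` on `U`: points of `U` where the total derivative
has rank `< p`. -/
def SingSet {n p : ℕ} (F : Eucl n → Eucl p) (U : Set (Eucl n)) : Set (Eucl n) :=
  {x ∈ U | LinearMap.rank ((fderiv ℝ F x : Eucl n →L[ℝ] Eucl p) : Eucl n →ₗ[ℝ] Eucl p)
    < (p : Cardinal)}


/-!
Fix `x₀ ∈ U` and let `A = D F(x₀)`, `B = D G(φ x₀)`. The difference quotients
`t⁻¹ • (φ (x₀ + t • v) - φ x₀)` are bounded, so along one ultrafilter finer than `t → 0⁺` they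
converge for every `v` at once, to a blow-up `d v`; `d` inherits the lower Lipschitz bound of `φ`.
If `A v = 0` then `F (x₀ + t • v) - F x₀ = o(t)`, hence by the asymptotic equivalence also
`G (φ (x₀ + t • v)) - G (φ x₀) = o(t)`, and comparing with `B` gives `B (d v) = 0`. So `d` is an
anti-Lipschitz map `ker A → ker B`, and Hausdorff dimension gives `dim ker A ≤ dim ker B`. The same
argument for `φ⁻¹` gives equality, and by rank–nullity `rank A = rank B`.
-/

open Module LinearMap
open scoped NNReal

theorem Set.BijOn.image_sep {α β : Type*} {f : α → β} {s : Set α} {t : Set β}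
    {P : α → Prop} {Q : β → Prop} (hf : BijOn f s t) (hPQ : ∀ x ∈ s, P x ↔ Q (f x)) :
    f '' {x ∈ s | P x} = {y ∈ t | Q y} := by
  ext y
  constructor
  · rintro ⟨x, ⟨hx, hPx⟩, rfl⟩
    exact ⟨hf.mapsTo hx, (hPQ x hx).1 hPx⟩
  · rintro ⟨hy, hQy⟩
    obtain ⟨x, hx, rfl⟩ := hf.surjOn hy
    exact ⟨x, ⟨hx, (hPQ x hx).2 hQy⟩, rfl⟩

theorem LinearMap.rank_eq_of_finrank_ker_eq {K M₁ M₂ : Type*} [DivisionRing K]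
    [AddCommGroup M₁] [Module K M₁] [FiniteDimensional K M₁] [AddCommGroup M₂] [Module K M₂]
    {f g : M₁ →ₗ[K] M₂} (h : finrank K (ker f) = finrank K (ker g)) : f.rank = g.rank := by
  have hf := f.finrank_range_add_finrank_ker
  have hg := g.finrank_range_add_finrank_ker
  rw [LinearMap.rank, LinearMap.rank, ← finrank_eq_rank, ← finrank_eq_rank]
  congr 1
  omega

theorem finrank_le_of_antilipschitzWith {E E' : Type*} [NormedAddCommGroup E] [NormedSpace ℝ E]
    [FiniteDimensional ℝ E] [NormedAddCommGroup E'] [NormedSpace ℝ E'] [FiniteDimensional ℝ E']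
    {K : ℝ≥0} {f : E → E'} (hf : AntilipschitzWith K f) : finrank ℝ E ≤ finrank ℝ E' := by
  have h := (hf.le_dimH_image univ).trans (dimH_mono (subset_univ (f '' univ)))
  rw [Real.dimH_univ_eq_finrank, Real.dimH_univ_eq_finrank] at h
  exact_mod_cast h

theorem Ultrafilter.exists_tendsto_of_eventually_norm_le {α E : Type*} [NormedAddCommGroup E]
    [ProperSpace E] (𝒰 : Ultrafilter α) {f : α → E} {R : ℝ} (h : ∀ᶠ a in 𝒰, ‖f a‖ ≤ R) :
    ∃ y, Tendsto f 𝒰 (𝓝 y) := by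
  obtain ⟨y, -, hy⟩ := (isCompact_closedBall (0 : E) R).ultrafilter_le_nhds (𝒰.map f)
    (le_principal_iff.2 (Ultrafilter.mem_map.2 (h.mono fun _ ha => mem_closedBall_zero_iff.2 ha)))
  exact ⟨y, hy⟩

section BlowUp

variable {E E' : Type*} [NormedAddCommGroup E] [NormedSpace ℝ E] [NormedAddCommGroup E']
  {φ : E → E'} {U : Set E} {x₀ : E} {K : ℝ≥0}

theorem tendsto_add_smul_nhds_zero (x v : E) : Tendsto (fun t : ℝ => x + t • v) (𝓝 0) (𝓝 x) :=
  Continuous.tendsto' (by fun_prop) 0 x (by simp)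

theorem eventually_add_smul_mem (hU : U ∈ 𝓝 x₀) (v : E) : ∀ᶠ t in 𝓝 (0 : ℝ), x₀ + t • v ∈ U :=
  tendsto_add_smul_nhds_zero x₀ v hU

theorem LipschitzOnWith.isBigO_add_smul_sub (hφ : LipschitzOnWith K φ U) (hU : U ∈ 𝓝 x₀)
    (v : E) : (fun t : ℝ => φ (x₀ + t • v) - φ x₀) =O[𝓝 0] fun t => t := by
  refine isBigO_iff.2 ⟨K * ‖v‖, ?_⟩
  filter_upwards [eventually_add_smul_mem hU v] with t ht
  calc ‖φ (x₀ + t • v) - φ x₀‖ ≤ K * ‖x₀ + t • v - x₀‖ := hφ.norm_sub_le ht (mem_of_mem_nhds hU)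
    _ = K * ‖v‖ * ‖t‖ := by rw [add_sub_cancel_left, norm_smul]; ring

variable [NormedSpace ℝ E']

theorem LipschitzOnWith.eventually_norm_slope_le (hφ : LipschitzOnWith K φ U) (hU : U ∈ 𝓝 x₀)
    (v : E) : ∀ᶠ t in 𝓝[>] (0 : ℝ), ‖t⁻¹ • (φ (x₀ + t • v) - φ x₀)‖ ≤ K * ‖v‖ := by
  filter_upwards [nhdsWithin_le_nhds (eventually_add_smul_mem hU v), self_mem_nhdsWithin]
    with t ht (htpos : 0 < t)
  calc ‖t⁻¹ • (φ (x₀ + t • v) - φ x₀)‖ ≤ t⁻¹ * (K * ‖x₀ + t • v - x₀‖) := by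
        rw [norm_smul, norm_inv, Real.norm_of_nonneg htpos.le]
        gcongr
        exact hφ.norm_sub_le ht (mem_of_mem_nhds hU)
    _ = K * ‖v‖ := by
        rw [add_sub_cancel_left, norm_smul, Real.norm_of_nonneg htpos.le]
        field_simp

theorem AntilipschitzWith.eventually_norm_sub_le_mul_slope
    (hφ : AntilipschitzWith K (U.domRestrict φ)) (hU : U ∈ 𝓝 x₀) (u w : E) :
    ∀ᶠ t in 𝓝[>] (0 : ℝ),
      ‖u - w‖ ≤ K * ‖t⁻¹ • (φ (x₀ + t • u) - φ x₀) - t⁻¹ • (φ (x₀ + t • w) - φ x₀)‖ := by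
  filter_upwards [nhdsWithin_le_nhds (eventually_add_smul_mem hU u),
    nhdsWithin_le_nhds (eventually_add_smul_mem hU w), self_mem_nhdsWithin]
    with t hu hw (htpos : 0 < t)
  have h := hφ.le_mul_dist ⟨_, hu⟩ ⟨_, hw⟩
  simp only [Subtype.dist_eq, domRestrict_apply, dist_eq_norm, add_sub_add_left_eq_sub,
    ← smul_sub, norm_smul, Real.norm_of_nonneg htpos.le] at h
  rw [← smul_sub, sub_sub_sub_cancel_right, norm_smul, norm_inv, Real.norm_of_nonneg htpos.le,
    ← mul_le_mul_iff_of_pos_left htpos]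
  calc t * ‖u - w‖ ≤ K * ‖φ (x₀ + t • u) - φ (x₀ + t • w)‖ := h
    _ = t * (K * (t⁻¹ * ‖φ (x₀ + t • u) - φ (x₀ + t • w)‖)) := by field_simp

theorem exists_antilipschitzWith_tendsto_slope [ProperSpace E'] {K' : ℝ≥0} (hU : U ∈ 𝓝 x₀)
    (hlip : LipschitzOnWith K φ U) (hanti : AntilipschitzWith K' (U.domRestrict φ))
    (𝒰 : Ultrafilter ℝ) (h𝒰 : ↑𝒰 ≤ 𝓝[>] (0 : ℝ)) :
    ∃ d : E → E', AntilipschitzWith K' d ∧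
      ∀ v, Tendsto (fun t => t⁻¹ • (φ (x₀ + t • v) - φ x₀)) (𝒰 : Filter ℝ) (𝓝 (d v)) := by
  choose d hd using fun v =>
    𝒰.exists_tendsto_of_eventually_norm_le (h𝒰 (hlip.eventually_norm_slope_le hU v))
  refine ⟨d, AntilipschitzWith.of_le_mul_dist fun u w => ?_, hd⟩
  rw [dist_eq_norm, dist_eq_norm]
  exact ge_of_tendsto (((hd u).sub (hd w)).norm.const_mul (K' : ℝ))
    (h𝒰 (hanti.eventually_norm_sub_le_mul_slope hU u w))

end BlowUp

section Kernel

variable {E E' Y : Type*} [NormedAddCommGroup E] [NormedSpace ℝ E] [NormedAddCommGroup E']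
  [NormedSpace ℝ E'] [NormedAddCommGroup Y] [NormedSpace ℝ Y]
  {F : E → Y} {G : E' → Y} {φ : E → E'} {U : Set E} {x₀ : E} {K : ℝ≥0}
  {A : E →L[ℝ] Y} {B : E' →L[ℝ] Y}

theorem isLittleO_apply_sub_of_apply_eq_zero (hU : U ∈ 𝓝 x₀) (hlip : LipschitzOnWith K φ U)
    (hF : HasFDerivAt F A x₀) (hG : HasFDerivAt G B (φ x₀))
    (hFG : (fun x => G (φ x) - G (φ x₀)) =O[𝓝 x₀] fun x => F x - F x₀) {v : E} (hv : A v = 0) :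
    (fun t : ℝ => B (φ (x₀ + t • v) - φ x₀)) =o[𝓝 0] fun t => t := by
  have hline := tendsto_add_smul_nhds_zero x₀ v
  have hFo : (fun t : ℝ => F (x₀ + t • v) - F x₀) =o[𝓝 0] fun t => t := by
    simpa [hv] using (hF.hasLineDerivAt v).isLittleO
  have hGo := (hFG.comp_tendsto hline).trans_isLittleO hFo
  have hφline := (hlip.continuousOn.continuousAt hU).tendsto.comp hline
  have hrem := (hG.isLittleO.comp_tendsto hφline).trans_isBigO (hlip.isBigO_add_smul_sub hU v)
  exact (hGo.sub hrem).congr_left fun t => sub_sub_cancel _ _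

theorem finrank_ker_le_of_isBigO [FiniteDimensional ℝ E] [FiniteDimensional ℝ E'] {K' : ℝ≥0}
    (hU : U ∈ 𝓝 x₀) (hlip : LipschitzOnWith K φ U) (hanti : AntilipschitzWith K' (U.domRestrict φ))
    (hF : HasFDerivAt F A x₀) (hG : HasFDerivAt G B (φ x₀))
    (hFG : (fun x => G (φ x) - G (φ x₀)) =O[𝓝 x₀] fun x => F x - F x₀) :
    finrank ℝ (ker (A : E →ₗ[ℝ] Y)) ≤ finrank ℝ (ker (B : E' →ₗ[ℝ] Y)) := by
  let 𝒰 := Ultrafilter.of (𝓝[>] (0 : ℝ))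
  have h𝒰 : ↑𝒰 ≤ 𝓝[>] (0 : ℝ) := Ultrafilter.of_le _
  obtain ⟨d, hd_anti, hd⟩ := exists_antilipschitzWith_tendsto_slope hU hlip hanti 𝒰 h𝒰
  have hker (v : ker (A : E →ₗ[ℝ] Y)) : d v ∈ ker (B : E' →ₗ[ℝ] Y) := by
    have hB := (isLittleO_apply_sub_of_apply_eq_zero hU hlip hF hG hFG v.2
      ).tendsto_inv_smul_nhds_zero.mono_left (h𝒰.trans nhdsWithin_le_nhds)
    simp only [← map_smul] at hB
    exact tendsto_nhds_unique ((B.continuous.tendsto _).comp (hd v)) hB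
  exact finrank_le_of_antilipschitzWith
    ((hd_anti.comp isometry_subtype_coe.antilipschitz).codRestrict hker)

end Kernel

section Lipeomorphism

variable {E E' : Type*} [NormedAddCommGroup E] [NormedAddCommGroup E'] {φ : E → E'} {U : Set E}
  {U' : Set E'}

theorem IsLipeoOn.exists_lipschitzOnWith_antilipschitzWith (h : IsLipeoOn φ U U') :
    ∃ K : ℝ≥0, LipschitzOnWith K φ U ∧ AntilipschitzWith K (U.domRestrict φ) := by
  obtain ⟨-, c, hc, hb⟩ := h
  have hc0 : 0 < c := one_pos.trans_le hc
  refine ⟨c.toNNReal, LipschitzOnWith.of_dist_le_mul fun x hx y hy => ?_,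
    AntilipschitzWith.of_le_mul_dist fun x y => ?_⟩
  · rw [Real.coe_toNNReal _ hc0.le, dist_eq_norm, dist_eq_norm]
    exact (hb x hx y hy).2
  · have h := (hb x x.2 y y.2).1
    rw [one_div_mul_eq_div, div_le_iff₀' hc0] at h
    rwa [Real.coe_toNNReal _ hc0.le, Subtype.dist_eq, dist_eq_norm, dist_eq_norm]

theorem IsLipeoOn.invFunOn (h : IsLipeoOn φ U U') : IsLipeoOn (Function.invFunOn φ U) U' U := by
  obtain ⟨hbij, c, hc, hb⟩ := h
  have hinv := hbij.invOn_invFunOn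
  have hmaps := hbij.surjOn.mapsTo_invFunOn
  refine ⟨hinv.symm.bijOn hmaps hbij.mapsTo, c, hc, fun a ha b hb' => ?_⟩
  have h := hb _ (hmaps ha) _ (hmaps hb')
  rw [hinv.2 ha, hinv.2 hb', one_div_mul_eq_div, div_le_iff₀' (one_pos.trans_le hc)] at h
  rw [one_div_mul_eq_div, div_le_iff₀' (one_pos.trans_le hc)]
  exact ⟨h.2, h.1⟩

end Lipeomorphism

namespace AsympLipEquivAtVia

variable {E E' Y : Type*} [NormedAddCommGroup E] [NormedAddCommGroup E'] [NormedSpace ℝ E']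
  [NormedAddCommGroup Y] {F : E → Y} {G : E' → Y} {φ : E → E'} {x₀ : E}

theorem isBigO (h : AsympLipEquivAtVia F G φ x₀) :
    (fun x => G (φ x) - G (φ x₀)) =O[𝓝 x₀] fun x => F x - F x₀ := by
  obtain ⟨c, -, hc⟩ := h
  exact isBigO_iff.2 ⟨c, hc.mono fun _ hx => hx.2⟩

theorem isBigO_symm (h : AsympLipEquivAtVia F G φ x₀) :
    (fun x => F x - F x₀) =O[𝓝 x₀] fun x => G (φ x) - G (φ x₀) := by
  obtain ⟨c, hc, hev⟩ := h
  refine isBigO_iff.2 ⟨c, hev.mono fun _ hx => ?_⟩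
  have h := hx.1
  rwa [one_div_mul_eq_div, div_le_iff₀' (one_pos.trans_le hc)] at h

theorem isBigO_comp_of_rightInvOn {ψ : E' → E} {y₀ : E'} (h : AsympLipEquivAtVia F G φ (ψ y₀))
    (hψ : ContinuousAt ψ y₀) (hφψ : ∀ᶠ y in 𝓝 y₀, φ (ψ y) = y) :
    (fun y => F (ψ y) - F (ψ y₀)) =O[𝓝 y₀] fun y => G y - G y₀ := by
  refine (h.isBigO_symm.comp_tendsto hψ).congr' EventuallyEq.rfl ?_
  filter_upwards [hφψ] with y hy
  simp [hy, hφψ.self_of_nhds]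

theorem finrank_ker_fderiv_eq [NormedSpace ℝ E] [FiniteDimensional ℝ E] [FiniteDimensional ℝ E']
    [NormedSpace ℝ Y] {U : Set E} {U' : Set E'} (h : AsympLipEquivAtVia F G φ x₀)
    (hU : IsOpen U) (hU' : IsOpen U') (hφ : IsLipeoOn φ U U') (hx₀ : x₀ ∈ U)
    (hF : DifferentiableAt ℝ F x₀) (hG : DifferentiableAt ℝ G (φ x₀)) :
    finrank ℝ (ker (fderiv ℝ F x₀ : E →ₗ[ℝ] Y)) =
      finrank ℝ (ker (fderiv ℝ G (φ x₀) : E' →ₗ[ℝ] Y)) := by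
  set ψ := Function.invFunOn φ U
  have hψφ : ψ (φ x₀) = x₀ := hφ.1.invOn_invFunOn.1 hx₀
  have hU'_nhds : U' ∈ 𝓝 (φ x₀) := hU'.mem_nhds (hφ.1.mapsTo hx₀)
  obtain ⟨K, hlip, hanti⟩ := hφ.exists_lipschitzOnWith_antilipschitzWith
  obtain ⟨K', hlip', hanti'⟩ := hφ.invFunOn.exists_lipschitzOnWith_antilipschitzWith
  refine le_antisymm (finrank_ker_le_of_isBigO (hU.mem_nhds hx₀) hlip hanti hF.hasFDerivAt
    hG.hasFDerivAt h.isBigO) ?_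
  have hGF := isBigO_comp_of_rightInvOn (hψφ.symm ▸ h) (hlip'.continuousOn.continuousAt hU'_nhds)
    (eventually_of_mem hU'_nhds fun y hy => hφ.1.invOn_invFunOn.2 hy)
  have hF' : HasFDerivAt F (fderiv ℝ F x₀) (ψ (φ x₀)) := hψφ.symm ▸ hF.hasFDerivAt
  exact finrank_ker_le_of_isBigO hU'_nhds hlip' hanti' hG.hasFDerivAt hF' hGF

end AsympLipEquivAtVia

/-- if `F ≈ G` via a lipeomorphism `φ` (at every point of `U`), then
`φ (Sing F) = Sing G`. -/
theorem image_singSet_of_asympLipEquiv {n p : ℕ}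
    (U V : Set (Eucl n)) (hU : IsOpen U) (hV : IsOpen V)
    (F G : Eucl n → Eucl p)
    (hF : ∀ y ∈ U, DifferentiableAt ℝ F y) (hG : ∀ y ∈ V, DifferentiableAt ℝ G y)
    (φ : Eucl n → Eucl n) (hφ : IsLipeoOn φ U V)
    (hequiv : ∀ x ∈ U, AsympLipEquivAtVia F G φ x) :
    φ '' SingSet F U = SingSet G V :=
  hφ.1.image_sep fun x hx => by
    rw [LinearMap.rank_eq_of_finrank_ker_eq ((hequiv x hx).finrank_ker_fderiv_eq hU hV hφ hx
      (hF x hx) (hG _ (hφ.1.mapsTo hx)))]
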